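/- Suppose χ_0, χ_1, …, χ_k ∈ ℤ^d (k ≥ 1) are nonzero and ∑_{i=0}^k c_i χ_i = 0 for some signs c_0, …, c_k ∈ {1, −1}; set C = {0,…,k}. Then ∑_{j ∈ C} ∑_{(A,B), |B| even} (−1)^{#{a ∈ A : a < j}} c_B · η̄_{A,B} = 0, where the inner sum is over all pairs of disjoint sets A, B with A ⊔ B = C∖{j} and |B| even, c_B := ∏_{i ∈ B} c_i, and η̄_{A,B} denotes the wedge product over i ∈ A ∪ B, taken in increasing order of i, of ω̄_i when i ∈ A and ψ_i when i ∈ B. -/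

import Mathlib

open scoped BigOperators

noncomputable section

set_option synthInstance.maxHeartbeats 1000000
set_option maxHeartbeats 1000000

/-- The field of rational functions in `d` variables over `ℚ`. -/
abbrev KK (d : ℕ) : Type := FractionRing (MvPolynomial (Fin d) ℚ)

/-- The module of Kähler differentials of `K` over `ℚ`. -/
abbrev ΩK (d : ℕ) : Type := KaehlerDifferential ℚ (KK d)

/-- The Laurent monomial `x^χ` associated with a character `χ ∈ ℤ^d`. -/
def xpow (d : ℕ) (χ : Fin d → ℤ) : KK d :=
  ∏ j : Fin d, (algebraMap (MvPolynomial (Fin d) ℚ) (KK d) (MvPolynomial.X j)) ^ (χ j)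

/-- The 1-form `ψ_χ = (x^χ)⁻¹ • D(x^χ)`, i.e. `dlog(x^χ)`. -/
def psiF (d : ℕ) (χ : Fin d → ℤ) : ΩK d :=
  (xpow d χ)⁻¹ • (KaehlerDifferential.D ℚ (KK d)) (xpow d χ)

/-- The 1-form `ω_χ = (1 - x^χ)⁻¹ • D(1 - x^χ)`, i.e. `dlog(1 - x^χ)`. -/
def omegaF (d : ℕ) (χ : Fin d → ℤ) : ΩK d :=
  (1 - xpow d χ)⁻¹ • (KaehlerDifferential.D ℚ (KK d)) (1 - xpow d χ)

/-- The 1-form `ω̄_χ = 2ω_χ - ψ_χ`. -/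
def obarF (d : ℕ) (χ : Fin d → ℤ) : ΩK d := 2 • omegaF d χ - psiF d χ

/-- The exterior algebra of the module of Kähler differentials over `K`. -/
abbrev ExtK (d : ℕ) := ExteriorAlgebra (KK d) (ΩK d)

/-- Inclusion of a 1-form into the exterior algebra. -/
def wdg (d : ℕ) (v : ΩK d) : ExtK d := ExteriorAlgebra.ι (KK d) v

/-- Ordered (wedge) product of elements indexed by a finite set of naturals,
taken in increasing order of the index. -/
def oprod (d : ℕ) (A : Finset ℕ) (f : ℕ → ExtK d) : ExtK d :=
  ((A.sort (· ≤ ·)).map f).prod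

theorem xpow_ne_zero (d : ℕ) (χ : Fin d → ℤ) : xpow d χ ≠ 0 := by
  apply Finset.prod_ne_zero_iff.2
  intro j _
  apply zpow_ne_zero
  simp [map_eq_zero_iff _ (IsFractionRing.injective (MvPolynomial (Fin d) ℚ) (KK d)), MvPolynomial.X_ne_zero]

theorem xpow_add (d : ℕ) (χ χ' : Fin d → ℤ) : xpow d (χ + χ') = xpow d χ * xpow d χ' := by
  rw [xpow, xpow, xpow, ← Finset.prod_mul_distrib]
  refine Finset.prod_congr rfl fun j _ => ?_
  rw [Pi.add_apply, zpow_add₀]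
  simp [map_eq_zero_iff _ (IsFractionRing.injective (MvPolynomial (Fin d) ℚ) (KK d)), MvPolynomial.X_ne_zero]

theorem xpow_zero (d : ℕ) : xpow d 0 = 1 := by simp [xpow]

theorem xpow_nat (d : ℕ) (ν : Fin d → ℕ) :
    xpow d (fun j => (ν j : ℤ)) =
      algebraMap (MvPolynomial (Fin d) ℚ) (KK d) (∏ j : Fin d, MvPolynomial.X j ^ ν j) := by
  rw [map_prod, xpow]
  refine Finset.prod_congr rfl fun j _ => ?_
  rw [map_pow, zpow_natCast]

theorem prod_X_pow_inj (d : ℕ) (ν μ : Fin d → ℕ)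
    (h : (∏ j : Fin d, MvPolynomial.X j ^ ν j : MvPolynomial (Fin d) ℚ) = ∏ j : Fin d, MvPolynomial.X j ^ μ j) :
    ν = μ := by
  have key : ∀ ρ : Fin d → ℕ, (∏ j : Fin d, MvPolynomial.X j ^ ρ j : MvPolynomial (Fin d) ℚ)
      = MvPolynomial.monomial (Finsupp.equivFunOnFinite.symm ρ) 1 := by
    intro ρ
    rw [← MvPolynomial.prod_X_pow_eq_monomial]
    refine (Finset.prod_subset (Finset.subset_univ _) ?_).symm
    · intro j _ hj
      simp only [Finsupp.notMem_support_iff] at hj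
      simp only [Finsupp.coe_equivFunOnFinite_symm] at hj ⊢
      rw [hj, pow_zero]
  rw [key, key, MvPolynomial.monomial_left_inj one_ne_zero] at h
  have := congrArg Finsupp.equivFunOnFinite h
  simpa using this

theorem xpow_ne_one (d : ℕ) (χ : Fin d → ℤ) (hχ : χ ≠ 0) : xpow d χ ≠ 1 := by
  intro h1
  apply hχ
  set νp : Fin d → ℕ := fun j => (χ j).toNat with hνp
  set νm : Fin d → ℕ := fun j => (-(χ j)).toNat with hνm
  have hsplit : (fun j => (νp j : ℤ)) = χ + (fun j => (νm j : ℤ)) := by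
    funext j
    simp only [Pi.add_apply, hνp, hνm]
    omega
  have h2 : xpow d (fun j => (νp j : ℤ)) = xpow d χ * xpow d (fun j => (νm j : ℤ)) := by
    rw [hsplit, xpow_add]
  rw [h1, one_mul, xpow_nat, xpow_nat] at h2
  have h3 := IsFractionRing.injective (MvPolynomial (Fin d) ℚ) (KK d) h2
  have h4 := prod_X_pow_inj d _ _ h3
  funext j
  have := congrFun h4 j
  simp only [hνp, hνm] at this
  simp only [Pi.zero_apply]
  omega


theorem psiF_add (d : ℕ) (χ χ' : Fin d → ℤ) : psiF d (χ + χ') = psiF d χ + psiF d χ' := by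
  have ha := xpow_ne_zero d χ
  have hb := xpow_ne_zero d χ'
  rw [psiF, psiF, psiF, xpow_add, Derivation.leibniz, smul_add, smul_smul, smul_smul]
  have e1 : (xpow d χ * xpow d χ')⁻¹ * xpow d χ = (xpow d χ')⁻¹ := by
    field_simp
  have e2 : (xpow d χ * xpow d χ')⁻¹ * xpow d χ' = (xpow d χ)⁻¹ := by
    field_simp
  rw [e1, e2, add_comm]

theorem psiF_zero (d : ℕ) : psiF d 0 = 0 := by
  simp [psiF, xpow_zero]

def psiHom (d : ℕ) : (Fin d → ℤ) →+ ΩK d := AddMonoidHom.mk' (psiF d) (psiF_add d)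

theorem psiF_zsmul (d : ℕ) (n : ℤ) (χ : Fin d → ℤ) : psiF d (n • χ) = n • psiF d χ :=
  map_zsmul (psiHom d) n χ

theorem obarF_eq (d : ℕ) (χ : Fin d → ℤ) (hχ : χ ≠ 0) :
    obarF d χ = ((xpow d χ + 1) / (xpow d χ - 1)) • psiF d χ := by
  have h0 := xpow_ne_zero d χ
  have h1 := xpow_ne_one d χ hχ
  have h1' : xpow d χ - 1 ≠ 0 := sub_ne_zero.2 h1
  have h1'' : (1 : KK d) - xpow d χ ≠ 0 := fun h => h1' (by linear_combination -h)
  set u := xpow d χ with hu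
  set Du := (KaehlerDifferential.D ℚ (KK d)) u with hDu
  have hDom : (KaehlerDifferential.D ℚ (KK d)) (1 - u) = -Du := by
    rw [map_sub, Derivation.map_one_eq_zero, zero_sub]
  rw [obarF, omegaF, psiF, ← hu, ← hDu, hDom, smul_neg, ← neg_smul]
  have h2 : (2:ℕ) • ((-(1-u)⁻¹) • Du) = ((2:KK d) * -(1-u)⁻¹) • Du := by
    rw [← Nat.cast_smul_eq_nsmul (KK d), smul_smul]; norm_num
  rw [h2, smul_smul, ← sub_smul]
  congr 1
  field_simp
  ring


theorem wdg_anticomm (d : ℕ) (x y : ΩK d) : wdg d x * wdg d y = -(wdg d y * wdg d x) := by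
  rw [eq_neg_iff_add_eq_zero]
  exact ExteriorAlgebra.ι_add_mul_swap x y

theorem wdg_sq (d : ℕ) (x : ΩK d) : wdg d x * wdg d x = 0 := ExteriorAlgebra.ι_sq_zero x

theorem wdg_slide (d : ℕ) (x : ΩK d) : ∀ (L : List (ΩK d)),
    wdg d x * (L.map (wdg d)).prod = ((-1:ℤ)^L.length) • ((L.map (wdg d)).prod * wdg d x)
  | [] => by simp
  | y :: L => by
    rw [List.map_cons, List.prod_cons, ← mul_assoc, wdg_anticomm d x y, neg_mul, mul_assoc,
      wdg_slide d x L, List.length_cons, mul_smul_comm, ← mul_assoc, pow_succ,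
      mul_neg_one, neg_smul]

theorem wdg_dup (d : ℕ) (L1 L2 L3 : List (ΩK d)) (v : ΩK d) :
    ((L1 ++ v :: (L2 ++ v :: L3)).map (wdg d)).prod = 0 := by
  rw [List.map_append, List.prod_append, List.map_cons, List.prod_cons, List.map_append,
    List.prod_append, List.map_cons, List.prod_cons]
  rw [← mul_assoc (wdg d v) ((List.map (wdg d) L2).prod), wdg_slide d v L2, smul_mul_assoc,
    mul_assoc ((List.map (wdg d) L2).prod) (wdg d v),
    ← mul_assoc (wdg d v) (wdg d v), wdg_sq]
  simp

theorem prod_smul_list (d : ℕ) : ∀ (l : List ℕ) (w : ℕ → KK d) (n : ℕ → ExtK d),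
    (l.map fun i => w i • n i).prod = (l.map w).prod • (l.map n).prod
  | [], _, _ => by simp
  | i :: l, w, n => by
    rw [List.map_cons, List.prod_cons, List.map_cons, List.prod_cons, List.map_cons,
      List.prod_cons, prod_smul_list d l w n, smul_mul_smul_comm]

theorem mem_range'_iff (s n m : ℕ) : m ∈ List.range' s n ↔ s ≤ m ∧ m < s + n := by
  rw [List.mem_range']
  constructor
  · rintro ⟨i, hi, rfl⟩; omega
  · intro h; exact ⟨m - s, by omega, by omega⟩

theorem sort_erase_range (k j : ℕ) (hj : j ≤ k) :
    ((Finset.range (k+1)).erase j).sort (· ≤ ·) = List.range j ++ List.range' (j+1) (k-j) := by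
  set l := List.range j ++ List.range' (j+1) (k-j) with hl
  have hmem : ∀ a, a ∈ l ↔ (a < j ∨ (j+1 ≤ a ∧ a < k+1)) := by
    intro a
    rw [hl, List.mem_append, List.mem_range, mem_range'_iff]
    omega
  have hnd : l.Nodup := by
    rw [hl]
    refine List.Nodup.append List.nodup_range List.nodup_range' ?_
    intro a ha hb
    rw [List.mem_range] at ha
    rw [mem_range'_iff] at hb
    omega
  have hsorted : l.Pairwise (· ≤ ·) := by
    rw [hl, List.pairwise_append]
    refine ⟨List.pairwise_le_range, ?_, ?_⟩
    · exact List.Pairwise.imp Nat.le_of_lt (List.pairwise_lt_range' (s := j+1) (n := k-j))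
    · intro a ha b hb
      rw [List.mem_range] at ha
      rw [mem_range'_iff] at hb
      omega
  have hfin : l.toFinset = (Finset.range (k+1)).erase j := by
    ext a
    rw [List.mem_toFinset, hmem, Finset.mem_erase, Finset.mem_range]
    omega
  rw [← hfin, List.toFinset_sort _ hnd]
  exact hsorted

theorem sort_prod_eq {M : Type*} [CommMonoid M] (s : Finset ℕ) (w : ℕ → M) :
    ((s.sort (· ≤ ·)).map w).prod = s.prod w := by
  rw [Finset.prod_eq_multiset_prod, ← Finset.sort_eq s (· ≤ ·), Multiset.map_coe,
    Multiset.prod_coe]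

theorem prod_dup_idx (d : ℕ) (f : ℕ → ΩK d) (l1 l2 l3 : List ℕ) (i : ℕ) :
    ((l1 ++ i :: (l2 ++ i :: l3)).map (fun t => wdg d (f t))).prod = 0 := by
  have h := wdg_dup d (l1.map f) (l2.map f) (l3.map f) (f i)
  simpa [List.map_append, List.map_map, Function.comp_def] using h

section Main
variable (d k : ℕ) (χ : ℕ → Fin d → ℤ) (c : ℕ → ℤ)

def mF (i : ℕ) : ExtK d := wdg d (psiF d (χ i))

def PsiJ (j : ℕ) : ExtK d := oprod d ((Finset.range (k+1)).erase j) (mF d χ)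

theorem PsiJ_eq (j : ℕ) (hj : j ≤ k) :
    PsiJ d k χ j = ((List.range j).map (mF d χ)).prod *
      ((List.range' (j+1) (k-j)).map (mF d χ)).prod := by
  rw [PsiJ, oprod, sort_erase_range k j hj, List.map_append, List.prod_append]

theorem prod_mid_zero (j i : ℕ) (hjk : j + 1 ≤ k) (hik : i ≤ k) (hij : i ≠ j) (hij1 : i ≠ j + 1) :
    ((List.range j).map (mF d χ)).prod *
      (mF d χ i * ((List.range' (j+2) (k-j-1)).map (mF d χ)).prod) = 0 := by
  have key : ∀ l1 l2 l3 : List ℕ, ∀ t : ℕ,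
      ((l1 ++ t :: (l2 ++ t :: l3)).map (mF d χ)).prod = 0 := by
    intro l1 l2 l3 t
    exact prod_dup_idx d (fun s => psiF d (χ s)) l1 l2 l3 t
  rcases Nat.lt_or_ge i j with hlt | hge
  · have h1 := List.range'_succ (s := i) (n := j-i-1) (step := 1)
    have e1 : j-i-1+1 = j-i := by omega
    rw [e1] at h1
    have h2 := List.range'_append_1 (s := 0) (m := i) (n := j-i)
    simp only [Nat.zero_add] at h2
    have e2 : i + (j - i) = j := by omega
    rw [e2] at h2
    have hsplit : List.range j = List.range i ++ i :: List.range' (i+1) (j-i-1) := by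
      rw [List.range_eq_range', List.range_eq_range', ← h1, h2]
    rw [hsplit]
    have := key (List.range i) (List.range' (i+1) (j-i-1)) (List.range' (j+2) (k-j-1)) i
    rw [← this]
    simp [List.map_append, List.prod_append, List.map_cons, List.prod_cons, mul_assoc, mF]
  · have hge2 : j + 2 ≤ i := by omega
    have h1 := List.range'_succ (s := i) (n := k-i) (step := 1)
    have e1 : k-i+1 = k-i+1 := rfl
    have h2 := List.range'_append_1 (s := j+2) (m := i-j-2) (n := k-i+1)
    have e2 : j+2+(i-j-2) = i := by omega
    have e3 : (i-j-2)+(k-i+1) = k-j-1 := by omega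
    rw [e2, e3] at h2
    have hsplit : List.range' (j+2) (k-j-1) =
        List.range' (j+2) (i-j-2) ++ i :: List.range' (i+1) (k-i) := by
      rw [← h1, h2]
    rw [hsplit]
    have := key (List.range j) (List.range' (j+2) (i-j-2)) (List.range' (i+1) (k-i)) i
    rw [← this]
    simp [List.map_append, List.prod_append, List.map_cons, List.prod_cons, mul_assoc, mF]
end Main

section Main2
variable (d k : ℕ) (χ : ℕ → Fin d → ℤ) (c : ℕ → ℤ)

theorem wdg_zsmul (d : ℕ) (n : ℤ) (v : ΩK d) : wdg d (n • v) = n • wdg d v :=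
  map_zsmul (ExteriorAlgebra.ι (KK d)) n v

theorem wdg_add (d : ℕ) (v w : ΩK d) : wdg d (v + w) = wdg d v + wdg d w :=
  map_add (ExteriorAlgebra.ι (KK d)) v w

theorem wdg_neg (d : ℕ) (v : ΩK d) : wdg d (-v) = - wdg d v :=
  map_neg (ExteriorAlgebra.ι (KK d)) v

theorem wdg_sum (d : ℕ) {ι : Type*} (s : Finset ι) (f : ι → ΩK d) :
    wdg d (∑ i ∈ s, f i) = ∑ i ∈ s, wdg d (f i) :=
  map_sum (ExteriorAlgebra.ι (KK d)) f s

theorem PsiJ_adjacent (hc : ∀ i ≤ k, c i = 1 ∨ c i = -1)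
    (hrel : ∑ i ∈ Finset.range (k+1), c i • psiF d (χ i) = 0)
    (j : ℕ) (hj : j + 1 ≤ k) :
    PsiJ d k χ (j+1) = (-(c j * c (j+1))) • PsiJ d k χ j := by
  set P := ((List.range j).map (mF d χ)).prod with hP
  set S := ((List.range' (j+2) (k-j-1)).map (mF d χ)).prod with hS
  have hPj : PsiJ d k χ j = P * (mF d χ (j+1) * S) := by
    have h := List.range'_succ (s := j+1) (n := k-j-1) (step := 1)
    have e : k-j-1+1 = k-j := by omega
    rw [e] at h
    rw [PsiJ_eq d k χ j (by omega), h, List.map_cons, List.prod_cons]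
  have hPj1 : PsiJ d k χ (j+1) = P * (mF d χ j * S) := by
    have e : k-(j+1) = k-j-1 := by omega
    rw [PsiJ_eq d k χ (j+1) hj, e, List.range_succ, List.map_append, List.prod_append,
      List.map_singleton, List.prod_singleton, mul_assoc]
  have key : c j • PsiJ d k χ (j+1) + c (j+1) • PsiJ d k χ j = 0 := by
    rw [hPj, hPj1]
    have w1 : ∀ i : ℕ, wdg d (c i • psiF d (χ i)) = c i • mF d χ i := fun i =>
      wdg_zsmul d (c i) (psiF d (χ i))
    have hcomb : c j • (P * (mF d χ j * S)) + c (j+1) • (P * (mF d χ (j+1) * S))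
        = P * (wdg d (c j • psiF d (χ j) + c (j+1) • psiF d (χ (j+1))) * S) := by
      rw [wdg_add, w1, w1, add_mul, mul_add, smul_mul_assoc, smul_mul_assoc,
        mul_smul_comm, mul_smul_comm]
    rw [hcomb]
    have hj_mem : j ∈ Finset.range (k+1) := Finset.mem_range.2 (by omega)
    have hj1_mem : j+1 ∈ (Finset.range (k+1)).erase j := by
      rw [Finset.mem_erase]
      exact ⟨by omega, Finset.mem_range.2 (by omega)⟩
    have h1 := Finset.add_sum_erase (Finset.range (k+1))
      (fun i => c i • psiF d (χ i)) hj_mem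
    have h2 := Finset.add_sum_erase ((Finset.range (k+1)).erase j)
      (fun i => c i • psiF d (χ i)) hj1_mem
    beta_reduce at h1 h2
    rw [← h2, ← add_assoc] at h1
    rw [← h1] at hrel
    have hrel2 : c j • psiF d (χ j) + c (j+1) • psiF d (χ (j+1)) =
        - ∑ i ∈ ((Finset.range (k+1)).erase j).erase (j+1), c i • psiF d (χ i) :=
      eq_neg_of_add_eq_zero_left hrel
    rw [hrel2, wdg_neg, wdg_sum]
    have : ∀ i ∈ ((Finset.range (k+1)).erase j).erase (j+1),
        wdg d (c i • psiF d (χ i)) = c i • mF d χ i := fun i _ => w1 i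
    rw [Finset.sum_congr rfl this, neg_mul, mul_neg, Finset.sum_mul, Finset.mul_sum]
    have hz : ∀ i ∈ ((Finset.range (k+1)).erase j).erase (j+1),
        P * (c i • mF d χ i * S) = 0 := by
      intro i hi
      rw [Finset.mem_erase, Finset.mem_erase, Finset.mem_range] at hi
      rw [smul_mul_assoc, mul_smul_comm, prod_mid_zero d k χ j i hj (by omega) hi.2.1 hi.1,
        smul_zero]
    rw [Finset.sum_congr rfl hz, Finset.sum_const_zero, neg_zero]
  have hcj := hc j (by omega)
  have hcsq : c j * c j = 1 := by rcases hcj with h | h <;> rw [h] <;> norm_num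
  have := congrArg (fun x => c j • x) key
  simp only [smul_add, smul_smul, smul_zero, hcsq, one_smul] at this
  have h3 : PsiJ d k χ (j+1) = - ((c j * c (j+1)) • PsiJ d k χ j) :=
    eq_neg_of_add_eq_zero_left this
  rw [h3, neg_smul]

theorem PsiJ_formula (hc : ∀ i ≤ k, c i = 1 ∨ c i = -1)
    (hrel : ∑ i ∈ Finset.range (k+1), c i • psiF d (χ i) = 0) :
    ∀ j ≤ k, PsiJ d k χ j = ((-1)^j * (c 0 * c j)) • PsiJ d k χ 0
  | 0, _ => by
    have hc0 := hc 0 (by omega)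
    have hsq : c 0 * c 0 = 1 := by rcases hc0 with h | h <;> rw [h] <;> norm_num
    rw [pow_zero, one_mul, hsq, one_smul]
  | (j+1), hj => by
    have ih := PsiJ_formula hc hrel j (by omega)
    rw [PsiJ_adjacent d k χ c hc hrel j hj, ih, smul_smul]
    congr 1
    have hcj := hc j (by omega)
    have hsq : c j * c j = 1 := by rcases hcj with h | h <;> rw [h] <;> norm_num
    linear_combination (-(-1:ℤ)^j * c 0 * c (j+1)) * hsq
end Main2

theorem telescope {R : Type*} [CommRing R] (a b : ℕ → R) :
    ∀ n : ℕ, ∑ j ∈ Finset.range n,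
        (a j - b j) * ((∏ i ∈ Finset.range j, b i) * ∏ i ∈ Finset.Ico (j+1) n, a i) =
      (∏ i ∈ Finset.range n, a i) - ∏ i ∈ Finset.range n, b i
  | 0 => by simp
  | (n+1) => by
    have ih := telescope a b n
    rw [Finset.sum_range_succ]
    have h1 : ∀ j ∈ Finset.range n,
        (a j - b j) * ((∏ i ∈ Finset.range j, b i) * ∏ i ∈ Finset.Ico (j+1) (n+1), a i) =
        ((a j - b j) * ((∏ i ∈ Finset.range j, b i) * ∏ i ∈ Finset.Ico (j+1) n, a i)) * a n := by
      intro j hj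
      rw [Finset.mem_range] at hj
      rw [Finset.prod_Ico_succ_top (by omega)]
      ring
    rw [Finset.sum_congr rfl h1, ← Finset.sum_mul, ih, Finset.Ico_self, Finset.prod_empty,
      Finset.prod_range_succ, Finset.prod_range_succ]
    ring

theorem telescope' {R : Type*} [CommRing R] (a b : ℕ → R) (n : ℕ) :
    ∑ j ∈ Finset.range n,
        (a j - b j) * ((∏ i ∈ Finset.range j, a i) * ∏ i ∈ Finset.Ico (j+1) n, b i) =
      (∏ i ∈ Finset.range n, a i) - ∏ i ∈ Finset.range n, b i := by
  have h := telescope b a n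
  have h2 : ∀ j ∈ Finset.range n,
      (a j - b j) * ((∏ i ∈ Finset.range j, a i) * ∏ i ∈ Finset.Ico (j+1) n, b i) =
      -((b j - a j) * ((∏ i ∈ Finset.range j, a i) * ∏ i ∈ Finset.Ico (j+1) n, b i)) := by
    intro j _; ring
  rw [Finset.sum_congr rfl h2, Finset.sum_neg_distrib, h]
  ring

theorem xpow_sum (d : ℕ) {ι : Type*} (s : Finset ι) (F : ι → (Fin d → ℤ)) :
    xpow d (∑ i ∈ s, F i) = ∏ i ∈ s, xpow d (F i) := by
  classical
  induction s using Finset.induction_on with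
  | empty => simp [xpow_zero]
  | insert _ _ hx ih =>
    rw [Finset.sum_insert hx, Finset.prod_insert hx, xpow_add, ih]

theorem xpow_neg (d : ℕ) (χ : Fin d → ℤ) : xpow d (-χ) = (xpow d χ)⁻¹ := by
  have h : xpow d (-χ) * xpow d χ = 1 := by
    rw [← xpow_add, neg_add_cancel, xpow_zero]
  exact eq_inv_of_mul_eq_one_left h

instance KK_charZero (d : ℕ) : CharZero (KK d) :=
  charZero_of_injective_algebraMap ((algebraMap ℚ (KK d)).injective)

theorem erase_range_split {M : Type*} [CommMonoid M] (k j : ℕ) (hj : j ≤ k) (f : ℕ → M) :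
    ∏ i ∈ (Finset.range (k+1)).erase j, f i =
      (∏ i ∈ Finset.range j, f i) * ∏ i ∈ Finset.Ico (j+1) (k+1), f i := by
  rw [← Finset.prod_union]
  · congr 1
    ext a
    simp only [Finset.mem_erase, Finset.mem_range, Finset.mem_union, Finset.mem_Ico]
    omega
  · rw [Finset.disjoint_left]
    intro a ha hb
    rw [Finset.mem_range] at ha
    rw [Finset.mem_Ico] at hb
    omega

def gF (d : ℕ) (χ : ℕ → Fin d → ℤ) (i : ℕ) : KK d :=
  (xpow d (χ i) + 1) / (xpow d (χ i) - 1)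

def hGF (d : ℕ) (χ : ℕ → Fin d → ℤ) (j i : ℕ) : KK d :=
  if i < j then -(gF d χ i) else gF d χ i

theorem prod_neg' {R : Type*} [CommRing R] {ι : Type*} (s : Finset ι) (f : ι → R) :
    ∏ i ∈ s, (-(f i)) = (-1)^s.card * ∏ i ∈ s, f i := by
  have : ∀ i ∈ s, -(f i) = (-1) * f i := by intro i _; ring
  rw [Finset.prod_congr rfl this, Finset.prod_mul_distrib, Finset.prod_const]

theorem sigma_eq (d k : ℕ) (χ : ℕ → Fin d → ℤ) (c : ℕ → ℤ) (j : ℕ) :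
    2 * (∑ A ∈ ((Finset.range (k+1)).erase j).powerset.filter
          (fun A => Even ((((Finset.range (k+1)).erase j) \ A).card)),
        (((((-1 : ℤ) ^ ((A.filter (fun a => a < j)).card)) *
            ∏ i ∈ ((Finset.range (k+1)).erase j) \ A, c i : ℤ) : KK d) *
          ∏ i ∈ A, gF d χ i))
    = (∏ i ∈ (Finset.range (k+1)).erase j, (hGF d χ j i + (c i : KK d))) +
      ∏ i ∈ (Finset.range (k+1)).erase j, (hGF d χ j i - (c i : KK d)) := by
  set S := (Finset.range (k+1)).erase j with hS
  rw [Finset.sum_filter]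
  have hT1 := Finset.prod_add (fun i => hGF d χ j i) (fun i => (c i : KK d)) S
  have hT2' : ∀ i ∈ S, (hGF d χ j i - (c i : KK d)) = (hGF d χ j i + (-(c i) : KK d)) := by
    intro i _; ring
  have hT2 := Finset.prod_add (fun i => hGF d χ j i) (fun i => (-(c i) : KK d)) S
  rw [Finset.prod_congr rfl hT2', hT2, hT1, ← Finset.sum_add_distrib, Finset.mul_sum]
  apply Finset.sum_congr rfl
  intro A hA
  rw [Finset.mem_powerset] at hA
  have hprodh : ∏ i ∈ A, hGF d χ j i =
      (-1)^((A.filter (fun a => a < j)).card) * ∏ i ∈ A, gF d χ i := by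
    rw [show (fun i => hGF d χ j i) = (fun i => if i < j then -(gF d χ i) else gF d χ i) from rfl]
    rw [Finset.prod_ite (fun i => -(gF d χ i)) (fun i => gF d χ i), prod_neg',
      mul_assoc, Finset.prod_filter_mul_prod_filter_not]
  have hprodnegc : ∏ i ∈ S \ A, (-(c i) : KK d) = (-1)^((S \ A).card) * ∏ i ∈ S \ A, (c i : KK d) :=
    prod_neg' _ _
  rcases Nat.even_or_odd ((S \ A).card) with he | ho
  · rw [if_pos he, hprodh, hprodnegc, he.neg_one_pow]
    push_cast
    ring
  · rw [if_neg (Nat.not_even_iff_odd.mpr ho), hprodh, hprodnegc, ho.neg_one_pow]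
    ring

def aG (d : ℕ) (χ : ℕ → Fin d → ℤ) (c : ℕ → ℤ) (i : ℕ) : KK d := gF d χ i + (c i : KK d)
def bG (d : ℕ) (χ : ℕ → Fin d → ℤ) (c : ℕ → ℤ) (i : ℕ) : KK d := gF d χ i - (c i : KK d)

theorem T1_eq (d k : ℕ) (χ : ℕ → Fin d → ℤ) (c : ℕ → ℤ) (j : ℕ) (hj : j ≤ k) :
    ∏ i ∈ (Finset.range (k+1)).erase j, (hGF d χ j i + (c i : KK d)) =
      (-1)^j * ((∏ i ∈ Finset.range j, bG d χ c i) *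
        ∏ i ∈ Finset.Ico (j+1) (k+1), aG d χ c i) := by
  rw [erase_range_split k j hj]
  have h1 : ∀ i ∈ Finset.range j, (hGF d χ j i + (c i : KK d)) = -(bG d χ c i) := by
    intro i hi
    rw [Finset.mem_range] at hi
    rw [hGF, if_pos hi, bG]
    ring
  have h2 : ∀ i ∈ Finset.Ico (j+1) (k+1), (hGF d χ j i + (c i : KK d)) = aG d χ c i := by
    intro i hi
    rw [Finset.mem_Ico] at hi
    rw [hGF, if_neg (by omega), aG]
  rw [Finset.prod_congr rfl h1, Finset.prod_congr rfl h2, prod_neg', Finset.card_range, mul_assoc]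

theorem T2_eq (d k : ℕ) (χ : ℕ → Fin d → ℤ) (c : ℕ → ℤ) (j : ℕ) (hj : j ≤ k) :
    ∏ i ∈ (Finset.range (k+1)).erase j, (hGF d χ j i - (c i : KK d)) =
      (-1)^j * ((∏ i ∈ Finset.range j, aG d χ c i) *
        ∏ i ∈ Finset.Ico (j+1) (k+1), bG d χ c i) := by
  rw [erase_range_split k j hj]
  have h1 : ∀ i ∈ Finset.range j, (hGF d χ j i - (c i : KK d)) = -(aG d χ c i) := by
    intro i hi
    rw [Finset.mem_range] at hi
    rw [hGF, if_pos hi, aG]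
    ring
  have h2 : ∀ i ∈ Finset.Ico (j+1) (k+1), (hGF d χ j i - (c i : KK d)) = bG d χ c i := by
    intro i hi
    rw [Finset.mem_Ico] at hi
    rw [hGF, if_neg (by omega), bG]
  rw [Finset.prod_congr rfl h1, Finset.prod_congr rfl h2, prod_neg', Finset.card_range, mul_assoc]

theorem prodA_eq_prodB (d k : ℕ) (χ : ℕ → Fin d → ℤ) (c : ℕ → ℤ)
    (hne : ∀ i ≤ k, χ i ≠ 0)
    (hc : ∀ i ≤ k, c i = 1 ∨ c i = -1)
    (hsum : ∑ i ∈ Finset.range (k+1), c i • χ i = 0) :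
    ∏ i ∈ Finset.range (k+1), aG d χ c i = ∏ i ∈ Finset.range (k+1), bG d χ c i := by
  have step : ∀ i ∈ Finset.range (k+1), aG d χ c i = bG d χ c i * xpow d (c i • χ i) := by
    intro i hi
    rw [Finset.mem_range] at hi
    have hik : i ≤ k := by omega
    have h0 := xpow_ne_zero d (χ i)
    have h1 : xpow d (χ i) - 1 ≠ 0 := sub_ne_zero.2 (xpow_ne_one d (χ i) (hne i hik))
    rcases hc i hik with hci | hci
    · rw [hci, one_smul, aG, bG, hci, gF]
      push_cast
      field_simp
      ring
    · rw [hci, neg_one_smul, xpow_neg, aG, bG, hci, gF]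
      push_cast
      field_simp
      ring
  rw [Finset.prod_congr rfl step, Finset.prod_mul_distrib, ← xpow_sum, hsum, xpow_zero, mul_one]

theorem wdg_ksmul (d : ℕ) (r : KK d) (v : ΩK d) : wdg d (r • v) = r • wdg d v :=
  map_smul (ExteriorAlgebra.ι (KK d)) r v

theorem inner_oprod (d k : ℕ) (χ : ℕ → Fin d → ℤ) (hne : ∀ i ≤ k, χ i ≠ 0)
    (j : ℕ) (A : Finset ℕ) (hA : A ⊆ (Finset.range (k+1)).erase j) :
    oprod d ((Finset.range (k+1)).erase j)
        (fun i => if i ∈ A then wdg d (obarF d (χ i)) else wdg d (psiF d (χ i)))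
      = (∏ i ∈ A, gF d χ i) • PsiJ d k χ j := by
  rw [oprod]
  have hfun : ∀ i ∈ ((Finset.range (k+1)).erase j).sort (· ≤ ·),
      (if i ∈ A then wdg d (obarF d (χ i)) else wdg d (psiF d (χ i))) =
        (if i ∈ A then gF d χ i else 1) • mF d χ i := by
    intro i hi
    rw [Finset.mem_sort] at hi
    rw [Finset.mem_erase, Finset.mem_range] at hi
    have hik : i ≤ k := by omega
    by_cases hiA : i ∈ A
    · rw [if_pos hiA, if_pos hiA, obarF_eq d (χ i) (hne i hik), gF]
      exact wdg_ksmul d _ _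
    · rw [if_neg hiA, if_neg hiA, one_smul]
      rfl
  rw [List.map_congr_left hfun, prod_smul_list, sort_prod_eq]
  have h2 : ∏ i ∈ (Finset.range (k+1)).erase j, (if i ∈ A then gF d χ i else 1)
      = ∏ i ∈ A, gF d χ i := by
    rw [Finset.prod_ite_mem, Finset.inter_eq_right.2 hA]
  rw [h2]
  rfl

theorem scalar_zero (d k : ℕ) (χ : ℕ → Fin d → ℤ) (c : ℕ → ℤ)
    (hne : ∀ i ≤ k, χ i ≠ 0)
    (hc : ∀ i ≤ k, c i = 1 ∨ c i = -1)
    (hsum : ∑ i ∈ Finset.range (k+1), c i • χ i = 0) :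
    ∑ j ∈ Finset.range (k+1),
      (∑ A ∈ ((Finset.range (k+1)).erase j).powerset.filter
          (fun A => Even ((((Finset.range (k+1)).erase j) \ A).card)),
        (((((-1 : ℤ) ^ ((A.filter (fun a => a < j)).card)) *
            ∏ i ∈ ((Finset.range (k+1)).erase j) \ A, c i : ℤ) : KK d) *
          ∏ i ∈ A, gF d χ i)) * ((((-1 : ℤ)^j * (c 0 * c j) : ℤ) : KK d)) = 0 := by
  have key : ∀ j ∈ Finset.range (k+1),
      (4 : KK d) * ((∑ A ∈ ((Finset.range (k+1)).erase j).powerset.filter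
          (fun A => Even ((((Finset.range (k+1)).erase j) \ A).card)),
        (((((-1 : ℤ) ^ ((A.filter (fun a => a < j)).card)) *
            ∏ i ∈ ((Finset.range (k+1)).erase j) \ A, c i : ℤ) : KK d) *
          ∏ i ∈ A, gF d χ i)) * ((((-1 : ℤ)^j * (c 0 * c j) : ℤ) : KK d)))
      = ((aG d χ c j - bG d χ c j) * ((∏ i ∈ Finset.range j, bG d χ c i) *
            ∏ i ∈ Finset.Ico (j+1) (k+1), aG d χ c i)) * (c 0 : KK d)
        + ((aG d χ c j - bG d χ c j) * ((∏ i ∈ Finset.range j, aG d χ c i) *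
            ∏ i ∈ Finset.Ico (j+1) (k+1), bG d χ c i)) * (c 0 : KK d) := by
    intro j hj
    rw [Finset.mem_range] at hj
    have hjk : j ≤ k := by omega
    have h2σ := sigma_eq d k χ c j
    have hT1 := T1_eq d k χ c j hjk
    have hT2 := T2_eq d k χ c j hjk
    have hab : aG d χ c j - bG d χ c j = 2 * (c j : KK d) := by
      rw [aG, bG]; ring
    have hsq : ((-1 : KK d)^j) * ((-1 : KK d)^j) = 1 := by
      rw [← mul_pow]; norm_num
    have hζ : ((((-1:ℤ)^j * (c 0 * c j) : ℤ)) : KK d)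
        = (-1:KK d)^j * ((c 0 : KK d) * (c j : KK d)) := by push_cast; ring
    rw [hab, hζ]
    calc (4 : KK d) * ((∑ A ∈ ((Finset.range (k+1)).erase j).powerset.filter
          (fun A => Even ((((Finset.range (k+1)).erase j) \ A).card)),
        (((((-1 : ℤ) ^ ((A.filter (fun a => a < j)).card)) *
            ∏ i ∈ ((Finset.range (k+1)).erase j) \ A, c i : ℤ) : KK d) *
          ∏ i ∈ A, gF d χ i)) * ((-1 : KK d)^j * ((c 0 : KK d) * (c j : KK d))))
        = (2 * (∑ A ∈ ((Finset.range (k+1)).erase j).powerset.filter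
          (fun A => Even ((((Finset.range (k+1)).erase j) \ A).card)),
        (((((-1 : ℤ) ^ ((A.filter (fun a => a < j)).card)) *
            ∏ i ∈ ((Finset.range (k+1)).erase j) \ A, c i : ℤ) : KK d) *
          ∏ i ∈ A, gF d χ i))) * (2 * ((-1 : KK d)^j * ((c 0 : KK d) * (c j : KK d)))) := by
          ring
      _ = ((∏ i ∈ (Finset.range (k+1)).erase j, (hGF d χ j i + (c i : KK d))) +
            ∏ i ∈ (Finset.range (k+1)).erase j, (hGF d χ j i - (c i : KK d))) *
            (2 * ((-1 : KK d)^j * ((c 0 : KK d) * (c j : KK d)))) := by rw [h2σ]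
      _ = ((-1 : KK d)^j * ((∏ i ∈ Finset.range j, bG d χ c i) *
              ∏ i ∈ Finset.Ico (j+1) (k+1), aG d χ c i) +
            (-1 : KK d)^j * ((∏ i ∈ Finset.range j, aG d χ c i) *
              ∏ i ∈ Finset.Ico (j+1) (k+1), bG d χ c i)) *
            (2 * ((-1 : KK d)^j * ((c 0 : KK d) * (c j : KK d)))) := by
          rw [hT1, hT2]
      _ = (2 * (c j : KK d) * ((∏ i ∈ Finset.range j, bG d χ c i) *
            ∏ i ∈ Finset.Ico (j+1) (k+1), aG d χ c i)) * (c 0 : KK d)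
        + (2 * (c j : KK d) * ((∏ i ∈ Finset.range j, aG d χ c i) *
            ∏ i ∈ Finset.Ico (j+1) (k+1), bG d χ c i)) * (c 0 : KK d) := by
          linear_combination (2 * (c 0 : KK d) * (c j : KK d) *
            ((∏ i ∈ Finset.range j, bG d χ c i) * ∏ i ∈ Finset.Ico (j+1) (k+1), aG d χ c i +
             (∏ i ∈ Finset.range j, aG d χ c i) * ∏ i ∈ Finset.Ico (j+1) (k+1), bG d χ c i)) * hsq
  have h4 : (4 : KK d) * (∑ j ∈ Finset.range (k+1),
      (∑ A ∈ ((Finset.range (k+1)).erase j).powerset.filter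
          (fun A => Even ((((Finset.range (k+1)).erase j) \ A).card)),
        (((((-1 : ℤ) ^ ((A.filter (fun a => a < j)).card)) *
            ∏ i ∈ ((Finset.range (k+1)).erase j) \ A, c i : ℤ) : KK d) *
          ∏ i ∈ A, gF d χ i)) * ((((-1 : ℤ)^j * (c 0 * c j) : ℤ) : KK d))) = 0 := by
    rw [Finset.mul_sum, Finset.sum_congr rfl key, Finset.sum_add_distrib, ← Finset.sum_mul,
      ← Finset.sum_mul, telescope, telescope',
      prodA_eq_prodB d k χ c hne hc hsum, sub_self]
    simp
  have h4' : (4 : KK d) ≠ 0 := by norm_num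
  exact (mul_eq_zero.mp h4).resolve_left h4'


/-- Proposition `prop:rel_unimod`, eq. `(eq:relazione_bar)`.
If `χ_0, …, χ_k ∈ ℤ^d` (k ≥ 1) are nonzero and `∑_{i=0}^k c_i χ_i = 0` with
`c_i ∈ {1,−1}`, and `C = {0,…,k}`, then
`∑_{j ∈ C} ∑_{A ⊔ B = C∖{j}, |B| even} (−1)^{#{a ∈ A : a < j}} c_B η̄_{A,B} = 0`.
Pairs `(A,B)` are parametrized by `A ⊆ C∖{j}` with `B = (C∖{j}) ∖ A` of even
cardinality. -/
theorem stmt_7 (d k : ℕ) (hk : 1 ≤ k) (χ : ℕ → Fin d → ℤ) (c : ℕ → ℤ)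
    (hne : ∀ i ≤ k, χ i ≠ 0)
    (hc : ∀ i ≤ k, c i = 1 ∨ c i = -1)
    (hsum : ∑ i ∈ Finset.range (k+1), c i • χ i = 0) :
    ∑ j ∈ Finset.range (k+1),
      ∑ A ∈ ((Finset.range (k+1)).erase j).powerset.filter
          (fun A => Even ((((Finset.range (k+1)).erase j) \ A).card)),
        (((-1 : ℤ) ^ ((A.filter (fun a => a < j)).card)) *
            ∏ i ∈ ((Finset.range (k+1)).erase j) \ A, c i) •
          oprod d ((Finset.range (k+1)).erase j)
            (fun i => if i ∈ A then wdg d (obarF d (χ i)) else wdg d (psiF d (χ i))) = 0 := by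
  have hrel : ∑ i ∈ Finset.range (k+1), c i • psiF d (χ i) = 0 := by
    have h1 : ∀ i ∈ Finset.range (k+1), c i • psiF d (χ i) = psiF d (c i • χ i) :=
      fun i _ => (psiF_zsmul d (c i) (χ i)).symm
    rw [Finset.sum_congr rfl h1]
    have h2 : ∑ i ∈ Finset.range (k+1), psiF d (c i • χ i)
        = psiF d (∑ i ∈ Finset.range (k+1), c i • χ i) :=
      (map_sum (psiHom d) (fun i => c i • χ i) (Finset.range (k+1))).symm
    rw [h2, hsum, psiF_zero]
  have hstep : ∀ j ∈ Finset.range (k+1),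
      (∑ A ∈ ((Finset.range (k+1)).erase j).powerset.filter
          (fun A => Even ((((Finset.range (k+1)).erase j) \ A).card)),
        (((-1 : ℤ) ^ ((A.filter (fun a => a < j)).card)) *
            ∏ i ∈ ((Finset.range (k+1)).erase j) \ A, c i) •
          oprod d ((Finset.range (k+1)).erase j)
            (fun i => if i ∈ A then wdg d (obarF d (χ i)) else wdg d (psiF d (χ i))))
      = ((∑ A ∈ ((Finset.range (k+1)).erase j).powerset.filter
          (fun A => Even ((((Finset.range (k+1)).erase j) \ A).card)),
        (((((-1 : ℤ) ^ ((A.filter (fun a => a < j)).card)) *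
            ∏ i ∈ ((Finset.range (k+1)).erase j) \ A, c i : ℤ) : KK d) *
          ∏ i ∈ A, gF d χ i)) * ((((-1 : ℤ)^j * (c 0 * c j) : ℤ) : KK d))) • PsiJ d k χ 0 := by
    intro j hj
    rw [Finset.mem_range] at hj
    have hjk : j ≤ k := by omega
    have hA : ∀ A ∈ ((Finset.range (k+1)).erase j).powerset.filter
          (fun A => Even ((((Finset.range (k+1)).erase j) \ A).card)),
        (((-1 : ℤ) ^ ((A.filter (fun a => a < j)).card)) *
            ∏ i ∈ ((Finset.range (k+1)).erase j) \ A, c i) •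
          oprod d ((Finset.range (k+1)).erase j)
            (fun i => if i ∈ A then wdg d (obarF d (χ i)) else wdg d (psiF d (χ i)))
        = (((((-1 : ℤ) ^ ((A.filter (fun a => a < j)).card)) *
            ∏ i ∈ ((Finset.range (k+1)).erase j) \ A, c i : ℤ) : KK d) *
          ∏ i ∈ A, gF d χ i) • PsiJ d k χ j := by
      intro A hA
      rw [Finset.mem_filter, Finset.mem_powerset] at hA
      rw [inner_oprod d k χ hne j A hA.1, ← Int.cast_smul_eq_zsmul (KK d), smul_smul]
    rw [Finset.sum_congr rfl hA, ← Finset.sum_smul, PsiJ_formula d k χ c hc hrel j hjk,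
      ← Int.cast_smul_eq_zsmul (KK d), smul_smul]
  rw [Finset.sum_congr rfl hstep, ← Finset.sum_smul, scalar_zero d k χ c hne hc hsum, zero_smul]
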